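/- Average-case Gaussian rate bound: Let f(x) = exp(−πx²) be the Gaussian, extended multiplicatively to ℝ², and let r₀ := √(ln 4/π). For any prime q and any r with r₀ < r < q/r₀, letting μ_{r,r} := E_{e←D_r}[f_r(e)] for the Gaussian channel D_r (either the continuous distribution on ℝ with density f_r(x)/r, or the discrete distribution on ℤ with mass f_r(x)/f_r(ℤ)), it holds that A^(2)_{q,r}(r)² := μ_{r,r}²/f_r(L_q) > (1/(r√2))·E_q(r)², where L_q := ∪_{z∈ℤ}((z,z) + qℤ²), E(x) := 1 − 2exp(−πx²/2), and E_q(r) := √(E(q/r)·E(r)). -/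

import Mathlib

/-!
Write `θ(s) = ∑_{n ∈ ℤ} exp(-π s n²)`. Parametrising `L_q` by `(m, a) ↦ (a, a + q m)` and
completing the square turns `f_r(L_q)` into a sum over `m` of `exp(-π q² m² / (2r²))` times a
shifted theta sum in `a`. By Poisson summation a shifted theta sum is at most the unshifted one,
and `θ(2/r²) = (r/√2) θ(r²/2)`, so `f_r(L_q) ≤ (r/√2) θ(r²/2) θ((q/r)²/2)`. Comparing
`θ(x²/2) = 1 + 2 ∑_{n ≥ 1} exp(-π x² n²/2)` with a geometric series gives
`θ(x²/2) < 1/E(x)` once `exp(-π x²/2) < 1/2`, which is exactly `x > r₀`; this is applied to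
`x = r` and `x = q/r`.
On the other side, `μ_{r,r} = 1/√2` for the continuous channel, and for the discrete one Poisson
summation gives `μ_{r,r} = θ(r²/2) / (√2 θ(r²)) ≥ 1/√2` since `θ` is antitone.
-/

noncomputable section

/-- The Gaussian function `f(x) = exp(-πx²)`. -/
def gauss (x : ℝ) : ℝ := Real.exp (-(Real.pi * x ^ 2))

/-- The lattice `L_q = ∪_{z∈ℤ} ((z,z) + qℤ²) ⊂ ℝ²`. -/
def LqSet (q : ℕ) : Set (ℝ × ℝ) :=
  {v | ∃ z w₁ w₂ : ℤ, v.1 = z + q * w₁ ∧ v.2 = z + q * w₂}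

/-- `f_s(L_q)`: the sum over `L_q` of the multiplicative extension of `f` to `ℝ²`,
scaled by `s` (i.e. `f_s(x) = f(x/s)`). -/
def fsLq (f : ℝ → ℝ) (s : ℝ) (q : ℕ) : ℝ :=
  ∑' v : LqSet q, f ((v : ℝ × ℝ).1 / s) * f ((v : ℝ × ℝ).2 / s)

/-- `r₀ = √(ln 4/π)`. -/
def r₀ : ℝ := Real.sqrt (Real.log 4 / Real.pi)

/-- The "fudge factor" `E(x) = 1 − 2exp(−πx²/2)`. -/
def Eg (x : ℝ) : ℝ := 1 - 2 * Real.exp (-(Real.pi * x ^ 2) / 2)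

/-- `E_q(r) = √(E(q/r)·E(r))`. -/
def Egq (q : ℕ) (r : ℝ) : ℝ := Real.sqrt (Eg (q / r) * Eg r)

open Real

def theta (s : ℝ) : ℝ := ∑' n : ℤ, rexp (-π * s * n ^ 2)

section Theta

variable {s : ℝ}

lemma summable_exp_neg_mul_add_sq (hs : 0 < s) (x : ℝ) :
    Summable fun n : ℤ => rexp (-π * s * (n + x) ^ 2) := by
  refine (HurwitzKernelBounds.summable_f_int 0 x hs).congr fun n => ?_
  simp only [HurwitzKernelBounds.f_int, pow_zero, one_mul]
  ring_nf

lemma summable_exp_neg_mul_int_sq (hs : 0 < s) :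
    Summable fun n : ℤ => rexp (-π * s * n ^ 2) := by
  simpa using summable_exp_neg_mul_add_sq hs 0

lemma theta_pos (hs : 0 < s) : 0 < theta s :=
  (summable_exp_neg_mul_int_sq hs).tsum_pos (fun _ => (exp_pos _).le) 0 (exp_pos _)

lemma theta_inv (hs : 0 < s) : theta s⁻¹ = √s * theta s := by
  rw [theta, Real.tsum_exp_neg_mul_int_sq (inv_pos.mpr hs), theta, ← sqrt_eq_rpow, sqrt_inv,
    one_div, inv_inv]
  simp only [div_inv_eq_mul]

lemma theta_le_theta_of_le {t : ℝ} (hs : 0 < s) (hst : s ≤ t) : theta t ≤ theta s :=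
  (summable_exp_neg_mul_int_sq (hs.trans_le hst)).tsum_le_tsum
    (fun n => exp_le_exp.mpr (by
      nlinarith [mul_nonneg (sub_nonneg.2 hst) (mul_nonneg pi_pos.le (sq_nonneg (n : ℝ)))]))
    (summable_exp_neg_mul_int_sq hs)

/-- By Poisson summation the shifted sum is `s^{-1/2} ∑ exp(-π n²/s) exp(-2πinx)`, whose modulus
is at most the unshifted value. -/
lemma tsum_exp_neg_mul_add_sq_le_theta (hs : 0 < s) (x : ℝ) :
    ∑' n : ℤ, rexp (-π * s * (n + x) ^ 2) ≤ theta s := by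
  set c := s⁻¹ with hc_def
  have hc : 0 < c := inv_pos.mpr hs
  have hpoisson :=
    Complex.tsum_exp_neg_quadratic (a := (c : ℂ)) (by simpa using hc) (-Complex.I * x)
  have hterm : ∀ n : ℤ, Complex.exp (-π / c * (n + Complex.I * (-Complex.I * x)) ^ 2)
      = (rexp (-π * s * (n + x) ^ 2) : ℂ) := by
    intro n
    rw [← mul_assoc, mul_neg, Complex.I_mul_I, neg_neg, one_mul, hc_def, Complex.ofReal_inv,
      div_inv_eq_mul]
    push_cast
    ring_nf
  have hnorm : ∀ n : ℤ, ‖Complex.exp (-π * c * n ^ 2 + 2 * π * (-Complex.I * x) * n)‖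
      = rexp (-π * c * n ^ 2) := fun n => by
    rw [Complex.norm_exp]
    congr 1
    simp [sq]
  simp_rw [hterm, ← Complex.ofReal_tsum] at hpoisson
  have hsqrt : ‖(c : ℂ) ^ (1 / 2 : ℂ)‖ = √c := by
    rw [Complex.norm_cpow_eq_rpow_re_of_pos hc, sqrt_eq_rpow]
    norm_num
  calc ∑' n : ℤ, rexp (-π * s * (n + x) ^ 2)
      = ‖(c : ℂ) ^ (1 / 2 : ℂ)‖
          * ‖∑' n : ℤ, Complex.exp (-π * c * n ^ 2 + 2 * π * (-Complex.I * x) * n)‖ := by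
        rw [hpoisson, norm_mul, norm_div, norm_one, ← mul_assoc, mul_one_div_cancel
          (by rw [hsqrt]; positivity), one_mul, Complex.norm_real,
          norm_of_nonneg (tsum_nonneg fun _ => (exp_pos _).le)]
    _ ≤ √c * ∑' n : ℤ, rexp (-π * c * n ^ 2) := by
        rw [hsqrt, ← tsum_congr hnorm]
        gcongr
        exact norm_tsum_le_tsum_norm
          ((summable_exp_neg_mul_int_sq hc).congr fun n => (hnorm n).symm)
    _ = theta s := by rw [← theta, ← theta_inv hc, hc_def, inv_inv]

lemma theta_lt (hs : 0 < s) (h : rexp (-π * s) < 1 / 2) :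
    theta s < 1 / (1 - 2 * rexp (-π * s)) := by
  set t := rexp (-π * s)
  have ht0 : 0 < t := exp_pos _
  have ht1 : t < 1 := by linarith
  have hle : ∀ n : ℕ, rexp (-π * s * ((n : ℝ) + 1) ^ 2) ≤ t * t ^ n := fun n => by
    rw [← pow_succ', ← exp_nat_mul]
    apply exp_le_exp.mpr
    push_cast
    nlinarith [mul_nonneg (mul_nonneg pi_pos.le hs.le) (by positivity : (0 : ℝ) ≤ n ^ 2 + n)]
  have hgeom : Summable fun n : ℕ => t * t ^ n :=
    (summable_geometric_of_lt_one ht0.le ht1).mul_left t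
  have htail : Summable fun n : ℕ => rexp (-π * s * ((n : ℝ) + 1) ^ 2) :=
    hgeom.of_nonneg_of_le (fun _ => (exp_pos _).le) hle
  have hsplit : theta s = 1 + 2 * ∑' n : ℕ, rexp (-π * s * ((n : ℝ) + 1) ^ 2) := by
    have hcast : ∀ n : ℕ, (((n : ℤ) + 1 : ℤ) : ℝ) = n + 1 := fun n => by push_cast; rfl
    rw [theta, tsum_of_add_one_of_neg_add_one (by simpa only [hcast] using htail)
      (by simpa only [Int.cast_neg, neg_sq, hcast] using htail)]
    simp only [Int.cast_neg, neg_sq, hcast, Int.cast_zero, zero_pow two_ne_zero, mul_zero,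
      exp_zero]
    ring
  have hT_pos : 0 < ∑' n : ℕ, rexp (-π * s * ((n : ℝ) + 1) ^ 2) :=
    htail.tsum_pos (fun _ => (exp_pos _).le) 0 (exp_pos _)
  have hT_le : ∑' n : ℕ, rexp (-π * s * ((n : ℝ) + 1) ^ 2) ≤ t / (1 - t) := by
    calc _ ≤ ∑' n : ℕ, t * t ^ n := htail.tsum_le_tsum hle hgeom
      _ = t / (1 - t) := by rw [tsum_mul_left, tsum_geometric_of_lt_one ht0.le ht1, div_eq_mul_inv]
  rw [le_div_iff₀ (by linarith)] at hT_le
  rw [hsplit, lt_div_iff₀ (by linarith)]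
  nlinarith [mul_pos hT_pos ht0]

end Theta

section Gaussian

variable {r : ℝ}

lemma gauss_div (r x : ℝ) : gauss (x / r) = rexp (-π * (r ^ 2)⁻¹ * x ^ 2) := by
  rw [gauss]
  ring_nf

lemma gauss_div_mul_gauss_div (r x : ℝ) :
    gauss (x / r) * gauss (x / r) = rexp (-π * (2 / r ^ 2) * x ^ 2) := by
  rw [gauss_div, ← exp_add]
  ring_nf

lemma integral_gauss_div_div_mul_gauss_div (hr : 0 < r) :
    ∫ e : ℝ, gauss (e / r) / r * gauss (e / r) = 1 / √2 := by
  have hint : (fun e : ℝ => gauss (e / r) / r * gauss (e / r))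
      = fun e => r⁻¹ * rexp (-(2 * π / r ^ 2) * e ^ 2) := funext fun e => by
    rw [div_mul_eq_mul_div, gauss_div_mul_gauss_div]
    ring_nf
  rw [hint, MeasureTheory.integral_const_mul, integral_gaussian,
    show π / (2 * π / r ^ 2) = r ^ 2 / 2 by field_simp, sqrt_div' _ zero_le_two, sqrt_sq hr.le]
  field_simp

lemma tsum_gauss_div (hr : 0 < r) : ∑' k : ℤ, gauss (k / r) = r * theta (r ^ 2) := by
  simp_rw [gauss_div]
  rw [← theta, theta_inv (by positivity), sqrt_sq hr.le]

lemma theta_two_div_sq (hr : 0 < r) : theta (2 / r ^ 2) = r / √2 * theta (r ^ 2 / 2) := by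
  rw [← inv_div, theta_inv (by positivity), sqrt_div' _ zero_le_two, sqrt_sq hr.le]

lemma tsum_gauss_div_mul_gauss_div (hr : 0 < r) :
    ∑' k : ℤ, gauss (k / r) * gauss (k / r) = r / √2 * theta (r ^ 2 / 2) := by
  simp_rw [gauss_div_mul_gauss_div]
  rw [← theta, theta_two_div_sq hr]

lemma inv_sqrt_two_le_tsum_gauss_sq_div_tsum_gauss (hr : 0 < r) :
    1 / √2 ≤ (∑' k : ℤ, gauss (k / r) * gauss (k / r)) / ∑' k : ℤ, gauss (k / r) := by
  rw [tsum_gauss_div_mul_gauss_div hr, tsum_gauss_div hr,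
    le_div_iff₀ (mul_pos hr (theta_pos (by positivity)))]
  have := theta_le_theta_of_le (s := r ^ 2 / 2) (t := r ^ 2) (by positivity)
    (by linarith [sq_nonneg r])
  calc 1 / √2 * (r * theta (r ^ 2)) = r / √2 * theta (r ^ 2) := by ring
    _ ≤ r / √2 * theta (r ^ 2 / 2) := by gcongr

end Gaussian

section FiberSum

variable {α β : Type*} {g : α → ℝ} {h : α → β → ℝ} {B : ℝ}

lemma summable_tsum_mul_of_tsum_le (hg : Summable g) (hg0 : ∀ a, 0 ≤ g a)
    (hB : ∀ a, ∑' b, h a b ≤ B) (hh0 : ∀ a b, 0 ≤ h a b) :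
    Summable fun a => ∑' b, g a * h a b := by
  refine (hg.mul_right B).of_nonneg_of_le (fun a => tsum_nonneg fun b => ?_) fun a => ?_
  · exact mul_nonneg (hg0 a) (hh0 a b)
  · rw [tsum_mul_left]
    exact mul_le_mul_of_nonneg_left (hB a) (hg0 a)

lemma summable_prod_mul_of_tsum_le (hg : Summable g) (hg0 : ∀ a, 0 ≤ g a)
    (hh0 : ∀ a b, 0 ≤ h a b) (hh : ∀ a, Summable (h a)) (hB : ∀ a, ∑' b, h a b ≤ B) :
    Summable fun p : α × β => g p.1 * h p.1 p.2 := by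
  have hnonneg : 0 ≤ fun p : α × β => g p.1 * h p.1 p.2 := fun p =>
    mul_nonneg (hg0 _) (hh0 _ _)
  rw [summable_prod_of_nonneg hnonneg]
  exact ⟨fun a => (hh a).mul_left (g a), summable_tsum_mul_of_tsum_le hg hg0 hB hh0⟩

lemma tsum_prod_mul_le (hg : Summable g) (hg0 : ∀ a, 0 ≤ g a) (hh0 : ∀ a b, 0 ≤ h a b)
    (hh : ∀ a, Summable (h a)) (hB : ∀ a, ∑' b, h a b ≤ B) :
    ∑' p : α × β, g p.1 * h p.1 p.2 ≤ (∑' a, g a) * B := by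
  rw [(summable_prod_mul_of_tsum_le hg hg0 hh0 hh hB).tsum_prod' fun a => (hh a).mul_left (g a),
    ← tsum_mul_right]
  refine (summable_tsum_mul_of_tsum_le hg hg0 hB hh0).tsum_le_tsum (fun a => ?_) (hg.mul_right B)
  rw [tsum_mul_left (a := g a)]
  exact mul_le_mul_of_nonneg_left (hB a) (hg0 a)

end FiberSum

section Shear

variable {a b : ℝ}

lemma summable_gaussian_shear (ha : 0 < a) (hb : 0 < b) (y : ℤ → ℝ) :
    Summable fun p : ℤ × ℤ => rexp (-π * a * p.1 ^ 2) * rexp (-π * b * (p.2 + y p.1) ^ 2) :=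
  summable_prod_mul_of_tsum_le (g := fun m : ℤ => rexp (-π * a * m ^ 2))
    (h := fun m n : ℤ => rexp (-π * b * (n + y m) ^ 2)) (summable_exp_neg_mul_int_sq ha)
    (fun _ => (exp_pos _).le) (fun _ _ => (exp_pos _).le)
    (fun m => summable_exp_neg_mul_add_sq hb (y m))
    (fun m => tsum_exp_neg_mul_add_sq_le_theta hb (y m))

lemma tsum_gaussian_shear_le (ha : 0 < a) (hb : 0 < b) (y : ℤ → ℝ) :
    ∑' p : ℤ × ℤ, rexp (-π * a * p.1 ^ 2) * rexp (-π * b * (p.2 + y p.1) ^ 2)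
      ≤ theta a * theta b :=
  tsum_prod_mul_le (g := fun m : ℤ => rexp (-π * a * m ^ 2))
    (h := fun m n : ℤ => rexp (-π * b * (n + y m) ^ 2)) (summable_exp_neg_mul_int_sq ha)
    (fun _ => (exp_pos _).le) (fun _ _ => (exp_pos _).le)
    (fun m => summable_exp_neg_mul_add_sq hb (y m))
    (fun m => tsum_exp_neg_mul_add_sq_le_theta hb (y m))

end Shear

section Lattice

variable {q : ℕ} {s : ℝ}

def LqSet.param (q : ℕ) (p : ℤ × ℤ) : LqSet q :=
  ⟨((p.2 : ℝ), (p.2 : ℝ) + q * p.1), p.2, 0, p.1, by simp, rfl⟩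

lemma LqSet.param_bijective (hq : 0 < q) : Function.Bijective (LqSet.param q) := by
  have hq' : (q : ℝ) ≠ 0 := by positivity
  constructor
  · rintro ⟨m₁, a₁⟩ ⟨m₂, a₂⟩ h
    obtain ⟨ha, hm⟩ := Prod.mk.inj (congrArg Subtype.val h)
    simp only [LqSet.param] at ha hm
    have ha : a₁ = a₂ := by exact_mod_cast ha
    subst ha
    have hm : m₁ = m₂ := by exact_mod_cast mul_left_cancel₀ hq' (add_left_cancel hm)
    rw [hm]
  · rintro ⟨v, z, w₁, w₂, h₁, h₂⟩
    refine ⟨(w₂ - w₁, z + q * w₁), Subtype.ext (Prod.ext ?_ ?_)⟩ <;>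
      simp only [LqSet.param, h₁, h₂] <;> push_cast <;> ring

lemma fsLq_eq_tsum_int_prod (hq : 0 < q) (f : ℝ → ℝ) :
    fsLq f s q = ∑' p : ℤ × ℤ, f (p.2 / s) * f ((p.2 + q * p.1) / s) :=
  ((Equiv.ofBijective _ (LqSet.param_bijective hq)).tsum_eq _).symm

/-- Completing the square: `a² + (a + qm)² = 2 (a + qm/2)² + q²m²/2`. -/
lemma gauss_div_mul_gauss_add_div (q a m s : ℝ) :
    gauss (a / s) * gauss ((a + q * m) / s)
      = rexp (-π * (q ^ 2 / (2 * s ^ 2)) * m ^ 2)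
        * rexp (-π * (2 / s ^ 2) * (a + q * m / 2) ^ 2) := by
  rw [gauss_div, gauss_div, ← exp_add, ← exp_add]
  ring_nf

lemma fsLq_gauss_eq (hq : 0 < q) :
    fsLq gauss s q = ∑' p : ℤ × ℤ, rexp (-π * (q ^ 2 / (2 * s ^ 2)) * p.1 ^ 2)
      * rexp (-π * (2 / s ^ 2) * (p.2 + q * p.1 / 2) ^ 2) := by
  rw [fsLq_eq_tsum_int_prod hq]
  exact tsum_congr fun p => gauss_div_mul_gauss_add_div _ _ _ _

lemma fsLq_gauss_pos (hq : 0 < q) (hs : 0 < s) : 0 < fsLq gauss s q := by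
  rw [fsLq_gauss_eq hq]
  exact (summable_gaussian_shear (a := q ^ 2 / (2 * s ^ 2)) (b := 2 / s ^ 2) (by positivity)
    (by positivity) fun m => q * m / 2).tsum_pos
    (fun _ => (mul_pos (exp_pos _) (exp_pos _)).le) (0, 0) (mul_pos (exp_pos _) (exp_pos _))

lemma fsLq_gauss_le (hq : 0 < q) (hs : 0 < s) :
    fsLq gauss s q ≤ theta (q ^ 2 / (2 * s ^ 2)) * theta (2 / s ^ 2) := by
  rw [fsLq_gauss_eq hq]
  exact tsum_gaussian_shear_le (by positivity) (by positivity) fun m => q * m / 2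

end Lattice

section RateBound

variable {q : ℕ} {r x : ℝ}

lemma r₀_pos : 0 < r₀ := sqrt_pos.mpr (div_pos (log_pos (by norm_num)) pi_pos)

lemma exp_neg_pi_mul_sq_div_two_lt_half (hx : r₀ < x) : rexp (-π * (x ^ 2 / 2)) < 1 / 2 := by
  have hsq : r₀ ^ 2 < x ^ 2 := pow_lt_pow_left₀ hx r₀_pos.le two_ne_zero
  have hr₀ : π * r₀ ^ 2 = 2 * log 2 := by
    rw [r₀, sq_sqrt (by positivity), mul_div_cancel₀ _ pi_ne_zero,
      show (4 : ℝ) = 2 ^ 2 by norm_num, log_pow, Nat.cast_ofNat]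
  calc rexp (-π * (x ^ 2 / 2)) < rexp (-log 2) := exp_lt_exp.mpr (by nlinarith [pi_pos])
    _ = 1 / 2 := by rw [exp_neg, exp_log two_pos, one_div]

lemma Eg_eq (x : ℝ) : Eg x = 1 - 2 * rexp (-π * (x ^ 2 / 2)) := by
  rw [Eg]
  ring_nf

lemma Eg_pos (hx : r₀ < x) : 0 < Eg x := by
  rw [Eg_eq]
  linarith [exp_neg_pi_mul_sq_div_two_lt_half hx]

lemma theta_sq_div_two_lt_inv_Eg (hx : r₀ < x) : theta (x ^ 2 / 2) < 1 / Eg x := by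
  have hx0 : 0 < x := r₀_pos.trans hx
  rw [Eg_eq]
  exact theta_lt (by positivity) (exp_neg_pi_mul_sq_div_two_lt_half hx)

lemma Egq_sq (hr : r₀ < r) (hqr : r₀ < q / r) : Egq q r ^ 2 = Eg (q / r) * Eg r :=
  sq_sqrt (mul_pos (Eg_pos hqr) (Eg_pos hr)).le

lemma fsLq_gauss_lt (hq : 0 < q) (hr : r₀ < r) (hqr : r₀ < q / r) :
    fsLq gauss r q < r / √2 / Egq q r ^ 2 := by
  have hr0 : 0 < r := r₀_pos.trans hr
  calc fsLq gauss r q ≤ theta (q ^ 2 / (2 * r ^ 2)) * theta (2 / r ^ 2) := fsLq_gauss_le hq hr0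
    _ = theta ((q / r) ^ 2 / 2) * (r / √2 * theta (r ^ 2 / 2)) := by
        rw [theta_two_div_sq hr0, div_pow, div_div, mul_comm (r ^ 2)]
    _ < 1 / Eg (q / r) * (r / √2 * (1 / Eg r)) := by
        have := theta_pos (s := r ^ 2 / 2) (by positivity)
        have := theta_pos (s := (q / r) ^ 2 / 2) (by positivity)
        gcongr
        exacts [theta_sq_div_two_lt_inv_Eg hqr, theta_sq_div_two_lt_inv_Eg hr]
    _ = r / √2 / Egq q r ^ 2 := by
        rw [Egq_sq hr hqr]
        ring

end RateBound

theorem avg_case_gaussian_rate_general (q : ℕ) (r : ℝ)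
    (hr₁ : r₀ < r) (hr₂ : r < q / r₀) :
    (∫ e : ℝ, gauss (e / r) / r * gauss (e / r)) ^ 2 / fsLq gauss r q >
        1 / (r * Real.sqrt 2) * Egq q r ^ 2 ∧
      ((∑' k : ℤ, gauss ((k : ℝ) / r) * gauss ((k : ℝ) / r)) /
            (∑' k : ℤ, gauss ((k : ℝ) / r))) ^ 2 / fsLq gauss r q >
        1 / (r * Real.sqrt 2) * Egq q r ^ 2 := by
  have hr : 0 < r := r₀_pos.trans hr₁
  have hqr : r₀ < q / r := by rwa [lt_div_iff₀ hr, mul_comm, ← lt_div_iff₀ r₀_pos]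
  have hq : 0 < q := Nat.cast_pos.mp ((div_pos_iff_of_pos_right r₀_pos).mp (hr.trans hr₂))
  have hF := fsLq_gauss_pos hq hr
  have hrate (μ : ℝ) (hμ : 1 / √2 ≤ μ) :
      μ ^ 2 / fsLq gauss r q > 1 / (r * √2) * Egq q r ^ 2 :=
    calc 1 / (r * √2) * Egq q r ^ 2 = (1 / √2) ^ 2 / (r / √2 / Egq q r ^ 2) := by
          field_simp
      _ < (1 / √2) ^ 2 / fsLq gauss r q := by gcongr; exact fsLq_gauss_lt hq hr₁ hqr
      _ ≤ μ ^ 2 / fsLq gauss r q := by gcongr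
  exact ⟨hrate _ (integral_gauss_div_div_mul_gauss_div hr).ge,
    hrate _ (inv_sqrt_two_le_tsum_gauss_sq_div_tsum_gauss hr)⟩

/-- Average-case Gaussian rate bound: for prime `q` and `r₀ < r < q/r₀`, for both the
continuous Gaussian channel (density `f_r(x)/r` on ℝ) and the discrete one (mass
`f_r(x)/f_r(ℤ)` on ℤ), with `μ_{r,r} = E_{e←D_r}[f_r(e)]`, we have
`A^(2)_{q,r}(r)² = μ_{r,r}²/f_r(L_q) > (1/(r√2))·E_q(r)²`. -/
theorem avg_case_gaussian_rate (q : ℕ) (hq : Nat.Prime q) (r : ℝ)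
    (hr₁ : r₀ < r) (hr₂ : r < q / r₀) :
    (∫ e : ℝ, gauss (e / r) / r * gauss (e / r)) ^ 2 / fsLq gauss r q >
        1 / (r * Real.sqrt 2) * Egq q r ^ 2 ∧
      ((∑' k : ℤ, gauss ((k : ℝ) / r) * gauss ((k : ℝ) / r)) /
            (∑' k : ℤ, gauss ((k : ℝ) / r))) ^ 2 / fsLq gauss r q >
        1 / (r * Real.sqrt 2) * Egq q r ^ 2 :=
  avg_case_gaussian_rate_general q r hr₁ hr₂

end
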